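/- Define f(y) = −(π²/6)y² − ∑_{n≥1} cos(n y log φ)/(φⁿ n²) + y ∑_{n≥1} sin(n y log φ)/(φⁿ n²) + Li₂(1/φ), where φ is the golden ratio. Then f(y) ≤ (2+y)(Li₂(1/φ) − 1/φ) − y²(π²/6 − Li₂(1/φ) − log²(φ)/(2φ) − log(φ)/φ) for all y ≥ 1, and this upper bound is negative for y ≥ 1. -/

import Mathlib

/-- The dilogarithm `Li₂(x) = ∑_{n≥1} xⁿ/n²`. -/
noncomputable def li2 (x : ℝ) : ℝ := ∑' n : ℕ, x ^ (n + 1) / ((n : ℝ) + 1) ^ 2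

/-- The golden ratio. -/
noncomputable def φ : ℝ := (1 + Real.sqrt 5) / 2

/-- The function `f(y) = (1+y²)s(y)` from the proof of Lemma 4.5. -/
noncomputable def f (y : ℝ) : ℝ :=
  -(Real.pi ^ 2 / 6) * y ^ 2
    - (∑' n : ℕ, Real.cos (((n : ℝ) + 1) * y * Real.log φ) / (φ ^ (n + 1) * ((n : ℝ) + 1) ^ 2))
    + y * (∑' n : ℕ, Real.sin (((n : ℝ) + 1) * y * Real.log φ) / (φ ^ (n + 1) * ((n : ℝ) + 1) ^ 2))
    + li2 (1 / φ)

lemma sqrt5_sq : Real.sqrt 5 ^ 2 = 5 := Real.sq_sqrt (by norm_num)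

lemma sqrt5_lo : 2.236 < Real.sqrt 5 := by
  nlinarith [sqrt5_sq, Real.sqrt_nonneg 5]

lemma sqrt5_hi : Real.sqrt 5 < 2.23607 := by
  nlinarith [sqrt5_sq, Real.sqrt_nonneg 5]

lemma φ_lo : 1.618 < φ := by unfold φ; linarith [sqrt5_lo]

lemma φ_hi : φ < 1.61804 := by unfold φ; linarith [sqrt5_hi]

lemma φ_pos : 0 < φ := by linarith [φ_lo]

lemma one_lt_φ : 1 < φ := by linarith [φ_lo]

lemma x_pos : 0 < 1 / φ := div_pos one_pos φ_pos

lemma x_lt_one : 1 / φ < 1 := by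
  rw [div_lt_one φ_pos]; exact one_lt_φ

lemma x_hi : 1 / φ ≤ 0.61805 := by
  rw [div_le_iff₀ φ_pos]; nlinarith [φ_lo]

lemma x_lo : 0.618 ≤ 1 / φ := by
  rw [le_div_iff₀ φ_pos]; nlinarith [φ_hi]

lemma logφ_pos : 0 < Real.log φ := Real.log_pos one_lt_φ

lemma sqrtφ_hi : Real.sqrt φ ≤ 1.2721 := by
  rw [show (1.2721 : ℝ) = Real.sqrt (1.2721 ^ 2) from (Real.sqrt_sq (by norm_num)).symm]
  exact Real.sqrt_le_sqrt (by nlinarith [φ_hi])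

lemma logφ_hi : Real.log φ ≤ 0.5442 := by
  have h1 : Real.log φ = 2 * Real.log (Real.sqrt φ) := by
    rw [Real.log_sqrt φ_pos.le]; ring
  have h2 : Real.log (Real.sqrt φ) ≤ Real.sqrt φ - 1 :=
    Real.log_le_sub_one_of_pos (Real.sqrt_pos.mpr φ_pos)
  linarith [sqrtφ_hi]

lemma li2_term_nonneg (x : ℝ) (hx : 0 ≤ x) (n : ℕ) :
    0 ≤ x ^ (n + 1) / ((n : ℝ) + 1) ^ 2 :=
  div_nonneg (pow_nonneg hx _) (by positivity)

lemma summable_li2_gen (x : ℝ) (hx0 : 0 ≤ x) (hx1 : x < 1) :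
    Summable (fun n : ℕ => x ^ (n + 1) / ((n : ℝ) + 1) ^ 2) := by
  apply Summable.of_nonneg_of_le (li2_term_nonneg x hx0) _
    (by simpa [pow_succ] using (summable_geometric_of_lt_one hx0 hx1).mul_right x)
  intro n
  apply div_le_self (pow_nonneg hx0 _)
  nlinarith [Nat.cast_nonneg (α := ℝ) n]

lemma summable_li2 : Summable (fun n : ℕ => (1 / φ) ^ (n + 1) / ((n : ℝ) + 1) ^ 2) :=
  summable_li2_gen _ x_pos.le x_lt_one

lemma trig_term_bound (u : ℝ) (hu : |u| ≤ 1) (n : ℕ) :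
    |u / (φ ^ (n + 1) * ((n : ℝ) + 1) ^ 2)| ≤ (1 / φ) ^ (n + 1) / ((n : ℝ) + 1) ^ 2 := by
  have hφ := φ_pos
  have hd : (0 : ℝ) < φ ^ (n + 1) * ((n : ℝ) + 1) ^ 2 := by positivity
  rw [abs_div, abs_of_pos hd]
  have h1 : |u| / (φ ^ (n + 1) * ((n : ℝ) + 1) ^ 2)
      ≤ 1 / (φ ^ (n + 1) * ((n : ℝ) + 1) ^ 2) := by
    exact (div_le_div_iff_of_pos_right hd).mpr hu
  have h2 : 1 / (φ ^ (n + 1) * ((n : ℝ) + 1) ^ 2)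
      = (1 / φ) ^ (n + 1) / ((n : ℝ) + 1) ^ 2 := by
    rw [one_div_pow, div_div]
  linarith

lemma summable_sin (y : ℝ) : Summable (fun n : ℕ =>
    Real.sin (((n : ℝ) + 1) * y * Real.log φ) / (φ ^ (n + 1) * ((n : ℝ) + 1) ^ 2)) := by
  apply Summable.of_norm_bounded summable_li2
  intro n
  rw [Real.norm_eq_abs]
  exact trig_term_bound _ (Real.abs_sin_le_one _) n

lemma summable_cos (y : ℝ) : Summable (fun n : ℕ =>
    Real.cos (((n : ℝ) + 1) * y * Real.log φ) / (φ ^ (n + 1) * ((n : ℝ) + 1) ^ 2)) := by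
  apply Summable.of_norm_bounded summable_li2
  intro n
  rw [Real.norm_eq_abs]
  exact trig_term_bound _ (Real.abs_cos_le_one _) n

lemma li2_nonneg : 0 ≤ li2 (1 / φ) := by
  unfold li2
  exact tsum_nonneg (li2_term_nonneg _ x_pos.le)

lemma li2_hi_gen (x : ℝ) (hx0 : 0 ≤ x) (hx1 : x ≤ 0.61805) : li2 x ≤ 0.759 := by
  have hxlt : x < 1 := lt_of_le_of_lt hx1 (by norm_num)
  have hsum := summable_li2_gen x hx0 hxlt
  have hcomp : ∀ n : ℕ, x ^ (n + 4 + 1) / (((n + 4 : ℕ) : ℝ) + 1) ^ 2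
      ≤ (x ^ 5 / 25) * x ^ n := by
    intro n
    have h1 : x ^ (n + 4 + 1) = (x ^ 5) * x ^ n := by ring
    have h2 : (25 : ℝ) ≤ (((n + 4 : ℕ) : ℝ) + 1) ^ 2 := by
      push_cast
      nlinarith [Nat.cast_nonneg (α := ℝ) n]
    have hd : (0 : ℝ) < (((n + 4 : ℕ) : ℝ) + 1) ^ 2 := by positivity
    rw [h1, div_le_iff₀ hd]
    have hxn : (0 : ℝ) ≤ x ^ 5 * x ^ n := by positivity
    nlinarith [hxn]
  have hnn : ∀ n : ℕ, 0 ≤ x ^ (n + 4 + 1) / (((n + 4 : ℕ) : ℝ) + 1) ^ 2 := by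
    intro n; positivity
  have hgeosum : Summable (fun n : ℕ => (x ^ 5 / 25) * x ^ n) :=
    (summable_geometric_of_lt_one hx0 hxlt).mul_left _
  have htail : (∑' n : ℕ, x ^ (n + 4 + 1) / (((n + 4 : ℕ) : ℝ) + 1) ^ 2)
      ≤ ∑' n : ℕ, (x ^ 5 / 25) * x ^ n :=
    Summable.tsum_le_tsum hcomp (Summable.of_nonneg_of_le hnn hcomp hgeosum) hgeosum
  have hgeo : (∑' n : ℕ, (x ^ 5 / 25) * x ^ n) = (x ^ 5 / 25) * (1 - x)⁻¹ := by
    rw [tsum_mul_left, tsum_geometric_of_lt_one hx0 hxlt]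
  have hinv : (1 - x)⁻¹ ≤ (0.38195 : ℝ)⁻¹ := by
    apply inv_anti₀ (by norm_num)
    linarith
  have hx5 : x ^ 5 ≤ (0.61805 : ℝ) ^ 5 := pow_le_pow_left₀ hx0 hx1 5
  have hx2 : x ^ 2 ≤ (0.61805 : ℝ) ^ 2 := pow_le_pow_left₀ hx0 hx1 2
  have hx3 : x ^ 3 ≤ (0.61805 : ℝ) ^ 3 := pow_le_pow_left₀ hx0 hx1 3
  have hx4 : x ^ 4 ≤ (0.61805 : ℝ) ^ 4 := pow_le_pow_left₀ hx0 hx1 4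
  have hli : li2 x = (∑ i ∈ Finset.range 4, x ^ (i + 1) / ((i : ℝ) + 1) ^ 2)
      + ∑' n : ℕ, x ^ (n + 4 + 1) / (((n + 4 : ℕ) : ℝ) + 1) ^ 2 :=
    (Summable.sum_add_tsum_nat_add 4 hsum).symm
  rw [hli]
  have hpartial : (∑ i ∈ Finset.range 4, x ^ (i + 1) / ((i : ℝ) + 1) ^ 2)
      = x + x ^ 2 / 4 + x ^ 3 / 9 + x ^ 4 / 16 := by
    norm_num [Finset.sum_range_succ]
  rw [hpartial]
  have htail2 : (∑' n : ℕ, x ^ (n + 4 + 1) / (((n + 4 : ℕ) : ℝ) + 1) ^ 2)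
      ≤ (0.61805 : ℝ) ^ 5 / 25 * (0.38195 : ℝ)⁻¹ := by
    refine htail.trans (hgeo.le.trans ?_)
    have h5 : (0 : ℝ) ≤ (1 - x)⁻¹ := by
      apply inv_nonneg.mpr; linarith
    calc x ^ 5 / 25 * (1 - x)⁻¹ ≤ (0.61805 : ℝ) ^ 5 / 25 * (1 - x)⁻¹ := by
          apply mul_le_mul_of_nonneg_right _ h5; linarith
      _ ≤ (0.61805 : ℝ) ^ 5 / 25 * (0.38195 : ℝ)⁻¹ := by
          apply mul_le_mul_of_nonneg_left hinv (by norm_num)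
  nlinarith [htail2]

lemma li2_hi : li2 (1 / φ) ≤ 0.759 := li2_hi_gen _ x_pos.le x_hi

lemma sin_series_bound (y : ℝ) (hy : 1 ≤ y) :
    (∑' n : ℕ, Real.sin (((n : ℝ) + 1) * y * Real.log φ) / (φ ^ (n + 1) * ((n : ℝ) + 1) ^ 2))
      ≤ y * Real.log φ * (1 / φ) + (li2 (1 / φ) - 1 / φ) := by
  have hy0 : (0 : ℝ) ≤ y := by linarith
  have hL := logφ_pos
  have hsing : Summable (fun n : ℕ =>
      if n = 0 then y * Real.log φ * (1 / φ) - 1 / φ else (0 : ℝ)) :=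
    (hasSum_ite_eq 0 (y * Real.log φ * (1 / φ) - 1 / φ)).summable
  have hg : Summable (fun n : ℕ => (1 / φ) ^ (n + 1) / ((n : ℝ) + 1) ^ 2
      + (if n = 0 then y * Real.log φ * (1 / φ) - 1 / φ else 0)) := summable_li2.add hsing
  have hterm : ∀ n : ℕ,
      Real.sin (((n : ℝ) + 1) * y * Real.log φ) / (φ ^ (n + 1) * ((n : ℝ) + 1) ^ 2)
      ≤ (1 / φ) ^ (n + 1) / ((n : ℝ) + 1) ^ 2
        + (if n = 0 then y * Real.log φ * (1 / φ) - 1 / φ else 0) := by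
    intro n
    cases n with
    | zero =>
      simp only [Nat.cast_zero, zero_add, pow_one, one_pow, mul_one, one_mul,
        eq_self_iff_true, if_true]
      have hsin : Real.sin (y * Real.log φ) ≤ y * Real.log φ :=
        Real.sin_le (mul_nonneg hy0 hL.le)
      have h1 : Real.sin (y * Real.log φ) / φ ≤ (y * Real.log φ) / φ :=
        (div_le_div_iff_of_pos_right φ_pos).mpr hsin
      have h2 : y * Real.log φ * (1 / φ) = y * Real.log φ / φ := by ring
      linarith
    | succ m =>
      simp only [Nat.succ_ne_zero, if_false, add_zero]
      exact (le_abs_self _).trans (trig_term_bound _ (Real.abs_sin_le_one _) (m + 1))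
  have htsum : (∑' n : ℕ, ((1 / φ) ^ (n + 1) / ((n : ℝ) + 1) ^ 2
      + (if n = 0 then y * Real.log φ * (1 / φ) - 1 / φ else 0)))
      = li2 (1 / φ) + (y * Real.log φ * (1 / φ) - 1 / φ) := by
    rw [Summable.tsum_add summable_li2 hsing, tsum_ite_eq]
    rfl
  have h := Summable.tsum_le_tsum hterm (summable_sin y) hg
  rw [htsum] at h
  linarith

lemma cos_series_bound (y : ℝ) (hy : 1 ≤ y) :
    (1 - y ^ 2 * (Real.log φ) ^ 2 / 2) * (1 / φ) + 1 / φ - li2 (1 / φ)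
      ≤ (∑' n : ℕ, Real.cos (((n : ℝ) + 1) * y * Real.log φ) /
          (φ ^ (n + 1) * ((n : ℝ) + 1) ^ 2)) := by
  have hsing : Summable (fun n : ℕ =>
      if n = 0 then (1 - y ^ 2 * (Real.log φ) ^ 2 / 2) * (1 / φ) + 1 / φ else (0 : ℝ)) :=
    (hasSum_ite_eq 0 _).summable
  have hg : Summable (fun n : ℕ => -((1 / φ) ^ (n + 1) / ((n : ℝ) + 1) ^ 2)
      + (if n = 0 then (1 - y ^ 2 * (Real.log φ) ^ 2 / 2) * (1 / φ) + 1 / φ else 0)) :=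
    summable_li2.neg.add hsing
  have hterm : ∀ n : ℕ,
      -((1 / φ) ^ (n + 1) / ((n : ℝ) + 1) ^ 2)
        + (if n = 0 then (1 - y ^ 2 * (Real.log φ) ^ 2 / 2) * (1 / φ) + 1 / φ else 0)
      ≤ Real.cos (((n : ℝ) + 1) * y * Real.log φ) / (φ ^ (n + 1) * ((n : ℝ) + 1) ^ 2) := by
    intro n
    cases n with
    | zero =>
      simp only [Nat.cast_zero, zero_add, pow_one, one_pow, mul_one, one_mul,
        eq_self_iff_true, if_true]
      have hcos : 1 - (y * Real.log φ) ^ 2 / 2 ≤ Real.cos (y * Real.log φ) :=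
        Real.one_sub_sq_div_two_le_cos
      have h1 : (1 - (y * Real.log φ) ^ 2 / 2) / φ ≤ Real.cos (y * Real.log φ) / φ :=
        (div_le_div_iff_of_pos_right φ_pos).mpr hcos
      have h2 : (1 - (y * Real.log φ) ^ 2 / 2) / φ
          = -(1 / φ) + ((1 - y ^ 2 * (Real.log φ) ^ 2 / 2) * (1 / φ) + 1 / φ) := by ring
      linarith
    | succ m =>
      simp only [Nat.succ_ne_zero, if_false, add_zero]
      exact le_trans (neg_le_neg (trig_term_bound _ (Real.abs_cos_le_one _) (m + 1)))
        (neg_abs_le _)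
  have htsum : (∑' n : ℕ, (-((1 / φ) ^ (n + 1) / ((n : ℝ) + 1) ^ 2)
      + (if n = 0 then (1 - y ^ 2 * (Real.log φ) ^ 2 / 2) * (1 / φ) + 1 / φ else 0)))
      = -li2 (1 / φ) + ((1 - y ^ 2 * (Real.log φ) ^ 2 / 2) * (1 / φ) + 1 / φ) := by
    rw [Summable.tsum_add summable_li2.neg hsing, tsum_ite_eq, tsum_neg]
    rfl
  have h := Summable.tsum_le_tsum hterm hg (summable_cos y)
  rw [htsum] at h
  linarith

theorem f_upper_bound_neg (y : ℝ) (hy : 1 ≤ y) :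
    f y ≤ (2 + y) * (li2 (1 / φ) - 1 / φ) -
        y ^ 2 * (Real.pi ^ 2 / 6 - li2 (1 / φ) - (Real.log φ) ^ 2 / (2 * φ) - Real.log φ / φ) ∧
      (2 + y) * (li2 (1 / φ) - 1 / φ) -
        y ^ 2 * (Real.pi ^ 2 / 6 - li2 (1 / φ) - (Real.log φ) ^ 2 / (2 * φ) - Real.log φ / φ)
        < 0 := by
  have hy0 : (0 : ℝ) ≤ y := by linarith
  have hφ := φ_pos
  constructor
  · have hS := sin_series_bound y hy
    have hC := cos_series_bound y hy
    have hyS := mul_le_mul_of_nonneg_left hS hy0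
    have key : f y ≤ (2 + y) * (li2 (1 / φ) - 1 / φ) -
          y ^ 2 * (Real.pi ^ 2 / 6 - li2 (1 / φ) - (Real.log φ) ^ 2 / (2 * φ) - Real.log φ / φ)
          - y ^ 2 * li2 (1 / φ) := by
      unfold f
      have hid : -(Real.pi ^ 2 / 6) * y ^ 2
          - ((1 - y ^ 2 * (Real.log φ) ^ 2 / 2) * (1 / φ) + 1 / φ - li2 (1 / φ))
          + y * (y * Real.log φ * (1 / φ) + (li2 (1 / φ) - 1 / φ)) + li2 (1 / φ)
          = (2 + y) * (li2 (1 / φ) - 1 / φ) -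
          y ^ 2 * (Real.pi ^ 2 / 6 - li2 (1 / φ) - (Real.log φ) ^ 2 / (2 * φ) - Real.log φ / φ)
          - y ^ 2 * li2 (1 / φ) := by
        field_simp
        ring
      linarith [hC, hyS]
    nlinarith [key, mul_nonneg (sq_nonneg y) li2_nonneg]
  · have hπ := Real.pi_gt_d6
    have hπ2 : (9.8696 : ℝ) < Real.pi ^ 2 := by nlinarith
    have hQ : Real.log φ / φ ≤ 0.3364 := by
      calc Real.log φ / φ ≤ 0.5442 / 1.618 :=
            div_le_div₀ (by norm_num) logφ_hi (by norm_num) φ_lo.le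
        _ ≤ 0.3364 := by norm_num
    have hP : (Real.log φ) ^ 2 / (2 * φ) ≤ 0.0916 := by
      calc (Real.log φ) ^ 2 / (2 * φ) ≤ (0.5442 : ℝ) ^ 2 / (2 * 1.618) :=
            div_le_div₀ (by norm_num) (by nlinarith [logφ_pos, logφ_hi]) (by norm_num)
              (by linarith [φ_lo])
        _ ≤ 0.0916 := by norm_num
    have h1 : li2 (1 / φ) - 1 / φ ≤ 0.141 := by linarith [li2_hi, x_lo]
    have h2 : (2 + y) * (li2 (1 / φ) - 1 / φ) ≤ (2 + y) * 0.141 :=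
      mul_le_mul_of_nonneg_left h1 (by linarith)
    have h3 : (0.4579 : ℝ) ≤ Real.pi ^ 2 / 6 - li2 (1 / φ) - (Real.log φ) ^ 2 / (2 * φ)
        - Real.log φ / φ := by linarith [li2_hi]
    have h4 : y ^ 2 * 0.4579 ≤ y ^ 2 * (Real.pi ^ 2 / 6 - li2 (1 / φ)
        - (Real.log φ) ^ 2 / (2 * φ) - Real.log φ / φ) :=
      mul_le_mul_of_nonneg_left h3 (sq_nonneg y)
    nlinarith [h2, h4, sq_nonneg (y - 1)]
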